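/- For generational pedigrees P and P' with g generations and for generation-preserving matchings, the quantities B_i satisfy the dynamic-programming recurrence: for every i ∈ {1,...,g-1} and every matching M of generation i, B_i(M) = min over matchings M' of generation i+1 of [B_{i+1}(M') + d_{{i,i+1}}(M ∪ M')], where d_{{i,i+1}} counts mismatched edges between generations i and i+1. -/

import Mathlib

/-- A generational pedigree graph: every edge goes from generation `i` to
generation `i+1`. -/
structure GPed (V : Type*) [Fintype V] where
  E : Set (V × V)
  gender : V → Bool
  gen : V → ℕ
  consec : ∀ e ∈ E, gen e.2 = gen e.1 + 1

variable {V V' : Type*} [Fintype V] [Fintype V']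

/-- A generation-preserving matching with domain exactly the generations in
`S`: injective, gender-preserving and generation-preserving. -/
def IsGMatch (P : GPed V) (P' : GPed V') (S : Set ℕ) (M : V → Option V') : Prop :=
  (∀ u v w, M u = some w → M v = some w → u = v) ∧
  (∀ u w, M u = some w → P.gender u = P'.gender w ∧ P'.gen w = P.gen u) ∧
  (∀ u, (M u).isSome = true ↔ P.gen u ∈ S)

/-- The edges of the sub-pedigree induced by the generations in `S`. -/
def ES (P : GPed V) (S : Set ℕ) : Set (V × V) :=
  {e ∈ P.E | P.gen e.1 ∈ S ∧ P.gen e.2 ∈ S}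

/-- Edges of `P|_S` well-matched by `M`. -/
def WS (P : GPed V) (P' : GPed V') (S : Set ℕ) (M : V → Option V') : Set (V × V) :=
  {e ∈ ES P S | ∃ a b, M e.1 = some a ∧ M e.2 = some b ∧ (a, b) ∈ ES P' S}

/-- Image in `P'|_S` of the well-matched edges. -/
def imgWS (P : GPed V) (P' : GPed V') (S : Set ℕ) (M : V → Option V') : Set (V' × V') :=
  {e' ∈ ES P' S | ∃ u v, (u, v) ∈ ES P S ∧ M u = some e'.1 ∧ M v = some e'.2}

/-- The match distance of `M` restricted to the generations in `S`. -/
noncomputable def dS (P : GPed V) (P' : GPed V') (S : Set ℕ) (M : V → Option V') : ℕ :=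
  (ES P S \ WS P P' S M).ncard + (ES P' S \ imgWS P P' S M).ncard

/-- `B_i(M)`: the minimum, over generation-preserving matchings `N` of
generations `i,…,g` agreeing with `M` on generation `i`, of the match distance
of `N` between `P|_{i,…,g}` and `P'|_{i,…,g}`. -/
noncomputable def B (P : GPed V) (P' : GPed V') (g i : ℕ) (M : V → Option V') : ℕ :=
  sInf {d | ∃ N : V → Option V', IsGMatch P P' (Set.Icc i g) N ∧
    (∀ u, P.gen u = i → N u = M u) ∧ dS P P' (Set.Icc i g) N = d}

/-- The union of two partial matchings with disjoint domains. -/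
def combine (M M' : V → Option V') : V → Option V' :=
  fun u => match M u with
    | some w => some w
    | none => M' u

/-!
Every edge joins consecutive generations, so for a generation-preserving matching the match
distance on generations `i, …, g` is the sum of the distances on `{i, i+1}` and on
`i+1, …, g`. Hence an optimal matching for `B_i(M)` restricts to some `M'` on generation
`i+1` and to a competitor for `B_{i+1}(M')`; conversely `M` together with an optimal matching
for `B_{i+1}(M')` is a competitor for `B_i(M)`. Equal fibre sizes of `(gen, gender)` give a
bijection `V ≃ V'` respecting both, so every partial matching extends and all the infima
involved are attained.
-/

section MatchDistance

variable {P : GPed V} {P' : GPed V'}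

lemma dS_congr (S : Set ℕ) {N N' : V → Option V'} (h : ∀ v, P.gen v ∈ S → N v = N' v) :
    dS P P' S N = dS P P' S N' := by
  have hW : WS P P' S N = WS P P' S N' :=
    Set.ext fun e => and_congr_right fun he => by rw [h _ he.2.1, h _ he.2.2]
  have hI : imgWS P P' S N = imgWS P P' S N' :=
    Set.ext fun e' => and_congr_right fun _ => exists₂_congr fun u v =>
      and_congr_right fun huv => by rw [h _ huv.2.1, h _ huv.2.2]
  rw [dS, dS, hW, hI]

lemma ES_Icc_eq_union (P : GPed V) {i g : ℕ} (hig : i < g) :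
    ES P (Set.Icc i g) = ES P {i, i + 1} ∪ ES P (Set.Icc (i + 1) g) := by
  ext e
  by_cases he : e ∈ P.E
  · have := P.consec e he
    simp only [ES, Set.mem_ofPred_eq, Set.mem_union, Set.mem_Icc, Set.mem_insert_iff,
      Set.mem_singleton_iff, he, true_and]
    omega
  · simp [ES, he]

lemma disjoint_ES_pair_Icc (P : GPed V) (i g : ℕ) :
    Disjoint (ES P {i, i + 1}) (ES P (Set.Icc (i + 1) g)) :=
  Set.disjoint_left.mpr fun e he₁ he₂ => by
    have := P.consec e he₁.1
    simp only [ES, Set.mem_ofPred_eq, Set.mem_Icc, Set.mem_insert_iff,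
      Set.mem_singleton_iff] at he₁ he₂
    omega

section GenPreserving

variable {N : V → Option V'} (hN : ∀ u w, N u = some w → P'.gen w = P.gen u)
include hN

lemma ES_diff_WS (S : Set ℕ) :
    ES P S \ WS P P' S N =
      ES P S \ {e | ∃ a b, N e.1 = some a ∧ N e.2 = some b ∧ (a, b) ∈ P'.E} := by
  ext e
  refine and_congr_right fun he => not_congr
    ⟨fun ⟨_, a, b, ha, hb, hab, _⟩ => ⟨a, b, ha, hb, hab⟩,
      fun ⟨a, b, ha, hb, hab⟩ => ⟨he, a, b, ha, hb, hab, ?_, ?_⟩⟩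
  · rw [hN _ _ ha]; exact he.2.1
  · rw [hN _ _ hb]; exact he.2.2

lemma ES_diff_imgWS (S : Set ℕ) :
    ES P' S \ imgWS P P' S N =
      ES P' S \ {e' | ∃ u v, (u, v) ∈ P.E ∧ N u = some e'.1 ∧ N v = some e'.2} := by
  ext e'
  refine and_congr_right fun he => not_congr
    ⟨fun ⟨_, u, v, huv, hu, hv⟩ => ⟨u, v, huv.1, hu, hv⟩,
      fun ⟨u, v, huv, hu, hv⟩ => ⟨he, u, v, ⟨huv, ?_, ?_⟩, hu, hv⟩⟩
  · rw [← hN _ _ hu]; exact he.2.1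
  · rw [← hN _ _ hv]; exact he.2.2

lemma dS_Icc_eq_add {i g : ℕ} (hig : i < g) :
    dS P P' (Set.Icc i g) N = dS P P' {i, i + 1} N + dS P P' (Set.Icc (i + 1) g) N := by
  simp only [dS, ES_diff_WS hN, ES_diff_imgWS hN]
  rw [ES_Icc_eq_union P hig, ES_Icc_eq_union P' hig, Set.union_sdiff_distrib,
    Set.union_sdiff_distrib,
    Set.ncard_union_eq ((disjoint_ES_pair_Icc P i g).mono Set.sdiff_subset Set.sdiff_subset),
    Set.ncard_union_eq ((disjoint_ES_pair_Icc P' i g).mono Set.sdiff_subset Set.sdiff_subset)]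
  ring

end GenPreserving

end MatchDistance

section Matchings

variable {P : GPed V} {P' : GPed V'} {g i : ℕ} {M : V → Option V'}

open Classical in
noncomputable def restrictGen (P : GPed V) (T : Set ℕ) (N : V → Option V') : V → Option V' :=
  fun v => if P.gen v ∈ T then N v else none

lemma IsGMatch.restrict {S T : Set ℕ} {N : V → Option V'} (hN : IsGMatch P P' S N)
    (hTS : T ⊆ S) : IsGMatch P P' T (restrictGen P T N) := by
  have key : ∀ v, (P.gen v ∈ T ∧ restrictGen P T N v = N v) ∨
      (P.gen v ∉ T ∧ restrictGen P T N v = none) := fun v => by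
    by_cases hv : P.gen v ∈ T
    exacts [.inl ⟨hv, if_pos hv⟩, .inr ⟨hv, if_neg hv⟩]
  refine ⟨fun u v w hu hv => ?_, fun u w hu => ?_, fun u => ?_⟩
  · rcases key u with ⟨-, hu'⟩ | ⟨-, hu'⟩ <;> rcases key v with ⟨-, hv'⟩ | ⟨-, hv'⟩ <;>
      simp only [hu', hv', reduceCtorEq] at hu hv
    exact hN.1 u v w hu hv
  · rcases key u with ⟨-, hu'⟩ | ⟨-, hu'⟩ <;> simp only [hu', reduceCtorEq] at hu
    exact hN.2.1 u w hu
  · rcases key u with ⟨hT, hu'⟩ | ⟨hT, hu'⟩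
    · simpa [hu', hT] using (hN.2.2 u).mpr (hTS hT)
    · simp [hu', hT]

lemma IsGMatch.combine_of_mem {S : Set ℕ} (hM : IsGMatch P P' S M)
    (N : V → Option V') {v : V} (hv : P.gen v ∈ S) : combine M N v = M v := by
  obtain ⟨w, hw⟩ := Option.isSome_iff_exists.mp ((hM.2.2 v).mpr hv)
  simp [combine, hw]

lemma IsGMatch.combine_of_notMem {S : Set ℕ} (hM : IsGMatch P P' S M)
    (N : V → Option V') {v : V} (hv : P.gen v ∉ S) : combine M N v = N v := by
  have hw : M v = none := Option.not_isSome_iff_eq_none.mp fun h => hv ((hM.2.2 v).mp h)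
  simp [combine, hw]

/-- Two vertices with the same image have the same generation, so they are matched by the
same one of `M`, `N`. -/
lemma IsGMatch.union {S T : Set ℕ} {N : V → Option V'} (hM : IsGMatch P P' S M)
    (hN : IsGMatch P P' T N) : IsGMatch P P' (S ∪ T) (combine M N) := by
  have key : ∀ v, (P.gen v ∈ S ∧ combine M N v = M v) ∨
      (P.gen v ∉ S ∧ combine M N v = N v) := fun v => by
    by_cases hv : P.gen v ∈ S
    exacts [.inl ⟨hv, hM.combine_of_mem N hv⟩, .inr ⟨hv, hM.combine_of_notMem N hv⟩]
  have hpres : ∀ u w, combine M N u = some w →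
      P.gender u = P'.gender w ∧ P'.gen w = P.gen u := fun u w hu => by
    rcases key u with ⟨-, hu'⟩ | ⟨-, hu'⟩ <;> rw [hu'] at hu
    exacts [hM.2.1 u w hu, hN.2.1 u w hu]
  refine ⟨fun u v w hu hv => ?_, hpres, fun u => ?_⟩
  · have huv : P.gen u = P.gen v := (hpres u w hu).2.symm.trans (hpres v w hv).2
    rcases key u with ⟨hSu, hu'⟩ | ⟨hSu, hu'⟩ <;>
      rcases key v with ⟨hSv, hv'⟩ | ⟨hSv, hv'⟩ <;> rw [hu'] at hu <;> rw [hv'] at hv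
    · exact hM.1 u v w hu hv
    · exact absurd (huv ▸ hSu) hSv
    · exact absurd (huv ▸ hSv) hSu
    · exact hN.1 u v w hu hv
  · rcases key u with ⟨hS, hu'⟩ | ⟨hS, hu'⟩ <;> rw [hu', Set.mem_union]
    · simpa [hS] using (hM.2.2 u).mpr hS
    · simpa [hS] using hN.2.2 u

lemma B_le_dS {N : V → Option V'} (hN : IsGMatch P P' (Set.Icc i g) N)
    (hNM : ∀ u, P.gen u = i → N u = M u) : B P P' g i M ≤ dS P P' (Set.Icc i g) N :=
  Nat.sInf_le ⟨N, hN, hNM, rfl⟩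

variable (hcard : ∀ (j : ℕ) (b : Bool),
  {v : V | P.gen v = j ∧ P.gender v = b}.ncard =
    {v : V' | P'.gen v = j ∧ P'.gender v = b}.ncard)
include hcard

lemma exists_equiv_gen_gender :
    ∃ e : V ≃ V', ∀ v, P'.gen (e v) = P.gen v ∧ P'.gender (e v) = P.gender v := by
  have hfib : ∀ c : ℕ × Bool, Nonempty ({v // (P.gen v, P.gender v) = c} ≃
      {v' // (P'.gen v', P'.gender v') = c}) := fun c => by
    apply Finite.card_eq.mp
    simpa [Prod.ext_iff, Set.ncard_eq_toFinset_card', Nat.card_eq_fintype_card,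
      Fintype.card_subtype] using hcard c.1 c.2
  refine ⟨Equiv.ofFiberEquiv fun c => (hfib c).some, fun v => ?_⟩
  simpa [Prod.ext_iff] using Equiv.ofFiberEquiv_map (fun c => (hfib c).some) v

lemma exists_isGMatch (S : Set ℕ) : ∃ N, IsGMatch P P' S N := by
  obtain ⟨e, he⟩ := exists_equiv_gen_gender hcard
  have huniv : IsGMatch P P' Set.univ (fun v => some (e v)) :=
    ⟨fun u v w hu hv => e.injective (Option.some.inj (hu.trans hv.symm)),
      fun u w hu => Option.some.inj hu ▸ ⟨(he u).2.symm, (he u).1⟩, fun _ => by simp⟩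
  exact ⟨_, huniv.restrict (Set.subset_univ S)⟩

lemma IsGMatch.exists_extend {S T : Set ℕ} (hM : IsGMatch P P' S M)
    (hST : S ⊆ T) : ∃ N, IsGMatch P P' T N ∧ ∀ v, P.gen v ∈ S → N v = M v := by
  obtain ⟨N, hN⟩ := exists_isGMatch hcard (T \ S)
  exact ⟨combine M N, Set.union_sdiff_cancel hST ▸ hM.union hN,
    fun v hv => hM.combine_of_mem N hv⟩

lemma exists_dS_eq_B (hM : IsGMatch P P' {i} M) (hig : i ≤ g) :
    ∃ N, IsGMatch P P' (Set.Icc i g) N ∧ (∀ u, P.gen u = i → N u = M u) ∧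
      dS P P' (Set.Icc i g) N = B P P' g i M := by
  obtain ⟨N, hN, hNM⟩ :=
    hM.exists_extend hcard (Set.singleton_subset_iff.mpr (Set.left_mem_Icc.mpr hig))
  exact (Nat.sInf_mem ⟨_, N, hN, hNM, rfl⟩ : B P P' g i M ∈ _)

lemma B_le_B_succ_add_dS (hig : i < g) (hM : IsGMatch P P' {i} M) {M' : V → Option V'}
    (hM' : IsGMatch P P' {i + 1} M') :
    B P P' g i M ≤ B P P' g (i + 1) M' + dS P P' {i, i + 1} (combine M M') := by
  obtain ⟨N, hN, hNM', hdN⟩ := exists_dS_eq_B hcard hM' hig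
  have hC : IsGMatch P P' (Set.Icc i g) (combine M N) := by
    have hIcc : {i} ∪ Set.Icc (i + 1) g = Set.Icc i g := by
      ext k; simp only [Set.mem_union, Set.mem_singleton_iff, Set.mem_Icc]; omega
    exact hIcc ▸ hM.union hN
  have hpair : ∀ v, P.gen v ∈ ({i, i + 1} : Set ℕ) → combine M N v = combine M M' v := by
    rintro v (hv | (hv : P.gen v = i + 1))
    · rw [hM.combine_of_mem N hv, hM.combine_of_mem M' hv]
    · have hvi : P.gen v ∉ ({i} : Set ℕ) := by simp [hv]
      rw [hM.combine_of_notMem N hvi, hM.combine_of_notMem M' hvi, hNM' v hv]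
  have htail : ∀ v, P.gen v ∈ Set.Icc (i + 1) g → combine M N v = N v := fun v hv =>
    hM.combine_of_notMem N (by simp only [Set.mem_singleton_iff]; grind)
  calc B P P' g i M ≤ dS P P' (Set.Icc i g) (combine M N) :=
        B_le_dS hC fun u hu => hM.combine_of_mem N hu
    _ = dS P P' {i, i + 1} (combine M N) + dS P P' (Set.Icc (i + 1) g) (combine M N) :=
        dS_Icc_eq_add (fun u w h => (hC.2.1 u w h).2) hig
    _ = B P P' g (i + 1) M' + dS P P' {i, i + 1} (combine M M') := by
        rw [dS_congr _ hpair, dS_congr _ htail, hdN, add_comm]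

lemma exists_B_succ_add_dS_le (hig : i < g) (hM : IsGMatch P P' {i} M) :
    ∃ M', IsGMatch P P' {i + 1} M' ∧
      B P P' g (i + 1) M' + dS P P' {i, i + 1} (combine M M') ≤ B P P' g i M := by
  obtain ⟨N, hN, hNM, hdN⟩ := exists_dS_eq_B hcard hM hig.le
  set M' := restrictGen P {i + 1} N
  set N₂ := restrictGen P (Set.Icc (i + 1) g) N
  have htail : Set.Icc (i + 1) g ⊆ Set.Icc i g := Set.Icc_subset_Icc_left i.le_succ
  have hM' : IsGMatch P P' {i + 1} M' :=
    hN.restrict (Set.singleton_subset_iff.mpr (Set.mem_Icc.mpr ⟨i.le_succ, hig⟩))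
  have hN₂M' : ∀ u, P.gen u = i + 1 → N₂ u = M' u := fun u hu => by
    simp [N₂, M', restrictGen, hu, Nat.succ_le_of_lt hig]
  have hpair : ∀ v, P.gen v ∈ ({i, i + 1} : Set ℕ) → combine M M' v = N v := by
    rintro v (hv | (hv : P.gen v = i + 1))
    · rw [hM.combine_of_mem M' hv, hNM v hv]
    · rw [hM.combine_of_notMem M' (by simp [hv]), show M' v = N v from if_pos hv]
  refine ⟨M', hM', ?_⟩
  calc B P P' g (i + 1) M' + dS P P' {i, i + 1} (combine M M')
      ≤ dS P P' (Set.Icc (i + 1) g) N₂ + dS P P' {i, i + 1} N :=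
        add_le_add (B_le_dS (hN.restrict htail) hN₂M') (dS_congr _ hpair).le
    _ = B P P' g i M := by
        rw [dS_congr (N := N₂) (N' := N) _ fun v hv => if_pos hv, add_comm,
          ← dS_Icc_eq_add (fun u w h => (hN.2.1 u w h).2) hig, hdN]

end Matchings

theorem B_recurrence_general (P : GPed V) (P' : GPed V') (g : ℕ)
    (hcard : ∀ (j : ℕ) (b : Bool),
      {v : V | P.gen v = j ∧ P.gender v = b}.ncard =
      {v : V' | P'.gen v = j ∧ P'.gender v = b}.ncard)
    (i : ℕ) (hi2 : i < g)
    (M : V → Option V') (hM : IsGMatch P P' {i} M) :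
    B P P' g i M = sInf {x | ∃ M' : V → Option V',
      IsGMatch P P' {i + 1} M' ∧
      x = B P P' g (i + 1) M' + dS P P' {i, i + 1} (combine M M')} := by
  obtain ⟨M₀, hM₀⟩ := exists_isGMatch hcard {i + 1}
  obtain ⟨M', hM', hle⟩ := exists_B_succ_add_dS_le hcard hi2 hM
  apply le_antisymm
  · refine le_csInf ⟨_, M₀, hM₀, rfl⟩ ?_
    rintro _ ⟨M', hM', rfl⟩
    exact B_le_B_succ_add_dS hcard hi2 hM hM'
  · exact le_trans (Nat.sInf_le ⟨M', hM', rfl⟩) hle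

/-- the dynamic-programming recurrence
`B_i(M) = min_{M' ∈ 𝓜({i+1})} (B_{i+1}(M') + d_{{i,i+1}}(M ∪ M'))`
for `1 ≤ i < g`, for generational pedigrees with `g` generations in which
males and females are equinumerous generation by generation. -/
theorem B_recurrence (P : GPed V) (P' : GPed V') (g : ℕ)
    (hgen : ∀ v : V, 1 ≤ P.gen v ∧ P.gen v ≤ g)
    (hgen' : ∀ v : V', 1 ≤ P'.gen v ∧ P'.gen v ≤ g)
    (hcard : ∀ (j : ℕ) (b : Bool),
      {v : V | P.gen v = j ∧ P.gender v = b}.ncard =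
      {v : V' | P'.gen v = j ∧ P'.gender v = b}.ncard)
    (i : ℕ) (hi1 : 1 ≤ i) (hi2 : i < g)
    (M : V → Option V') (hM : IsGMatch P P' {i} M) :
    B P P' g i M = sInf {x | ∃ M' : V → Option V',
      IsGMatch P P' {i + 1} M' ∧
      x = B P P' g (i + 1) M' + dS P P' {i, i + 1} (combine M M')} :=
  B_recurrence_general P P' g hcard i hi2 M hM
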